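/- Each p-stretching step strictly decreases the count of occurrences of p in rule bodies (of rules with head ≠ p); hence for any p ∈ stret(S) there is a finite sequence of p-stretching steps S ⇁ₚ S₁ ⇁ₚ ... ⇁ₚ Sₙ with p ∉ stret(Sₙ). -/
import Mathlib


inductive Sign : Type
  | pos : Sign
  | neg : Sign
deriving DecidableEq

/-- A rule with a head symbol and a body of signed symbol occurrences. -/
structure SRule (P : Type*) where
  head : P
  body : Finset (P × Sign)
deriving DecidableEq

variable {P : Type*} [DecidableEq P]

def ren (p p' q : P) : P := if q = p then p' else q

def renRule (p p' : P) (r : SRule P) : SRule P :=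
  ⟨ren p p' r.head, r.body.image (fun q => (ren p p' q.1, q.2))⟩

/-- p' is fresh in S: it occurs nowhere in S. -/
def Fresh (p' : P) (S : Finset (SRule P)) : Prop :=
  ∀ r ∈ S, r.head ≠ p' ∧ ∀ s, (p', s) ∉ r.body

/-- p occurs in the body of rule r. -/
def OccursIn (p : P) (r : SRule P) : Prop := ∃ s, (p, s) ∈ r.body

/-- p ∈ stret(S) (with respect to the abstract trace function tr):
a p-stretching of S exists. -/
def stret (tr : SRule P → P → Sign) (S : Finset (SRule P)) : Set P :=
  {p | ∃ c1 ∈ S, ∃ c2 ∈ S, OccursIn p c1 ∧ OccursIn p c2 ∧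
        tr c1 p ≠ tr c2 p ∧ c1.head ≠ c2.head ∧ c1.head ≠ p ∧ c2.head ≠ p}

/-- S ⇁ₚ S': a p-stretching step introducing the fresh symbol p'. -/
def StretchStep (tr : SRule P → P → Sign) (S : Finset (SRule P)) (p p' : P)
    (S' : Finset (SRule P)) : Prop :=
  Fresh p' S ∧
  ∃ c1 ∈ S, ∃ c2 ∈ S, OccursIn p c1 ∧ OccursIn p c2 ∧
    tr c1 p ≠ tr c2 p ∧ c1.head ≠ c2.head ∧ c1.head ≠ p ∧ c2.head ≠ p ∧
    S' = (S.erase c1) ∪ {renRule p p' c1} ∪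
          (S.filter (fun c => c.head = p)).image (renRule p p')

/-- Number of body occurrences of p in rules whose head is not p. -/
def occMeasure (S : Finset (SRule P)) (p : P) : ℕ :=
  (S.filter (fun c => c.head ≠ p ∧ p ∈ c.body.image Prod.fst)).card

lemma renRule_no_p (p p' : P) (hne : p ≠ p') (r : SRule P) :
    p ∉ (renRule p p' r).body.image Prod.fst := by
  intro h
  rw [renRule] at h
  simp only [Finset.mem_image] at h
  obtain ⟨x, ⟨⟨q, s⟩, _, rfl⟩, hxp⟩ := h
  simp only [ren] at hxp
  split at hxp
  · exact hne hxp.symm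
  · exact ‹¬ _› hxp

lemma stretch_decreases (tr : SRule P → P → Sign) (p : P)
    (S S' : Finset (SRule P)) (p' : P)
    (h : StretchStep tr S p p' S') : occMeasure S' p < occMeasure S p := by
  obtain ⟨hfresh, c1, hc1, c2, hc2, hocc1, hocc2, htr, hhead, h1p, h2p, hS'⟩ := h
  have hpne : p ≠ p' := by
    obtain ⟨s, hs⟩ := hocc1
    rintro rfl
    exact (hfresh c1 hc1).2 s hs
  have hc1mem : c1 ∈ S.filter (fun c => c.head ≠ p ∧ p ∈ c.body.image Prod.fst) := by
    obtain ⟨s, hs⟩ := hocc1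
    exact Finset.mem_filter.mpr ⟨hc1, h1p, Finset.mem_image.mpr ⟨(p, s), hs, rfl⟩⟩
  have hsub : S'.filter (fun c => c.head ≠ p ∧ p ∈ c.body.image Prod.fst) ⊆
      (S.filter (fun c => c.head ≠ p ∧ p ∈ c.body.image Prod.fst)).erase c1 := by
    intro r hr
    obtain ⟨hrS', hrhead, hrp⟩ := Finset.mem_filter.mp hr
    rw [hS'] at hrS'
    simp only [Finset.mem_union, Finset.mem_singleton, Finset.mem_image,
      Finset.mem_filter, Finset.mem_erase] at hrS'
    rcases hrS' with (⟨hne, hrS⟩ | rfl) | ⟨c, ⟨_, _⟩, rfl⟩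
    · exact Finset.mem_erase.mpr ⟨hne, Finset.mem_filter.mpr ⟨hrS, hrhead, hrp⟩⟩
    · exact absurd hrp (renRule_no_p p p' hpne c1)
    · exact absurd hrp (renRule_no_p p p' hpne c)
  calc occMeasure S' p ≤ _ := Finset.card_le_card hsub
    _ < occMeasure S p := Finset.card_erase_lt_of_mem hc1mem

lemma stretch_exists [Infinite P] (tr : SRule P → P → Sign) (p : P)
    (S : Finset (SRule P)) (hp : p ∈ stret tr S) :
    ∃ p' S', StretchStep tr S p p' S' := by
  obtain ⟨c1, hc1, c2, hc2, hocc1, hocc2, htr, hhead, h1p, h2p⟩ := hp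
  obtain ⟨p', hp'⟩ := Infinite.exists_notMem_finset
    (S.biUnion (fun r => insert r.head (r.body.image Prod.fst)))
  have hfresh : Fresh p' S := by
    intro r hr
    have h1 : p' ∉ insert r.head (r.body.image Prod.fst) := fun h =>
      hp' (Finset.mem_biUnion.mpr ⟨r, hr, h⟩)
    simp only [Finset.mem_insert, Finset.mem_image, not_or, not_exists] at h1
    refine ⟨fun h => h1.1 h.symm, fun s hs => ?_⟩
    exact h1.2 (p', s) ⟨hs, rfl⟩
  exact ⟨p', _, hfresh, c1, hc1, c2, hc2, hocc1, hocc2, htr, hhead, h1p, h2p, rfl⟩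

lemma stretch_terminates [Infinite P] (tr : SRule P → P → Sign) (p : P) :
    ∀ (N : ℕ) (S : Finset (SRule P)), occMeasure S p ≤ N → p ∈ stret tr S →
      ∃ n > 0, ∃ f : ℕ → Finset (SRule P), f 0 = S ∧
        (∀ i < n, ∃ p', StretchStep tr (f i) p p' (f (i + 1))) ∧
        p ∉ stret tr (f n) := by
  intro N
  induction N with
  | zero =>
    intro S hle hp
    exfalso
    obtain ⟨c1, hc1, c2, hc2, hocc1, hocc2, htr, hhead, h1p, h2p⟩ := hp
    have : c1 ∈ S.filter (fun c => c.head ≠ p ∧ p ∈ c.body.image Prod.fst) := by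
      obtain ⟨s, hs⟩ := hocc1
      exact Finset.mem_filter.mpr ⟨hc1, h1p, Finset.mem_image.mpr ⟨(p, s), hs, rfl⟩⟩
    have hpos := Finset.card_pos.mpr ⟨c1, this⟩
    rw [occMeasure] at hle
    omega
  | succ N ih =>
    intro S hle hp
    obtain ⟨p', S', hstep⟩ := stretch_exists tr p S hp
    have hdec := stretch_decreases tr p S S' p' hstep
    by_cases hps : p ∈ stret tr S'
    · obtain ⟨n, hn, f, hf0, hfstep, hfend⟩ := ih S' (by omega) hps
      refine ⟨n + 1, by omega, fun i => if i = 0 then S else f (i - 1), rfl, ?_, ?_⟩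
      · intro i hi
        rcases Nat.eq_zero_or_pos i with rfl | hipos
        · exact ⟨p', by simpa [hf0] using hstep⟩
        · obtain ⟨j, rfl⟩ := Nat.exists_eq_succ_of_ne_zero (by omega : i ≠ 0)
          simp only [if_neg (Nat.succ_ne_zero j), if_neg (Nat.succ_ne_zero (j + 1)),
            Nat.add_sub_cancel]
          exact hfstep j (by omega)
      · simpa using hfend
    · refine ⟨1, by omega, fun i => if i = 0 then S else S', rfl, ?_, by simpa using hps⟩
      intro i hi
      interval_cases i
      exact ⟨p', by simpa using hstep⟩

theorem stretchStep_decreases_and_terminates [Infinite P]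
    (tr : SRule P → P → Sign) (p : P) :
    (∀ (S S' : Finset (SRule P)) (p' : P),
        StretchStep tr S p p' S' → occMeasure S' p < occMeasure S p) ∧
    (∀ S : Finset (SRule P), p ∈ stret tr S →
      ∃ n > 0, ∃ f : ℕ → Finset (SRule P), f 0 = S ∧
        (∀ i < n, ∃ p', StretchStep tr (f i) p p' (f (i + 1))) ∧
        p ∉ stret tr (f n)) :=
  ⟨stretch_decreases tr p,
   fun S hp => stretch_terminates tr p (occMeasure S p) S le_rfl hp⟩
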